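/- The images in PSL(2, 7) of the three matrices a = [[6,1],[6,0]], b = [[1,6],[3,5]], c = [[3,4],[0,5]] (each of determinant 1 over 𝔽₇) generate PSL(2, 7). In fact, in PSL(2, 7) one has b⁻¹a⁻²b⁻¹ab⁻¹ = [[1,1],[0,1]] and ca⁻¹bc² = [[1,0],[1,1]], and the images of [[1,1],[0,1]] and [[1,0],[1,1]] generate PSL(2, 7). -/
import Mathlib


open Matrix
open scoped MatrixGroups

namespace Stmt13

/-- The natural projection `SL(2, 𝔽₇) → PSL(2, 𝔽₇)`. -/
def π : SpecialLinearGroup (Fin 2) (ZMod 7) →* PSL(2, ZMod 7) :=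
  QuotientGroup.mk' (Subgroup.center (SpecialLinearGroup (Fin 2) (ZMod 7)))

def a : SpecialLinearGroup (Fin 2) (ZMod 7) := ⟨!![6, 1; 6, 0], by decide⟩
def b : SpecialLinearGroup (Fin 2) (ZMod 7) := ⟨!![1, 6; 3, 5], by decide⟩
def c : SpecialLinearGroup (Fin 2) (ZMod 7) := ⟨!![3, 4; 0, 5], by decide⟩
def T : SpecialLinearGroup (Fin 2) (ZMod 7) := ⟨!![1, 1; 0, 1], by decide⟩
def U : SpecialLinearGroup (Fin 2) (ZMod 7) := ⟨!![1, 0; 1, 1], by decide⟩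

instance : DecidableEq (SpecialLinearGroup (Fin 2) (ZMod 7)) :=
  fun x y => decidable_of_iff (x.1 = y.1) Subtype.ext_iff.symm

lemma Tpow (n : ℕ) :
    ((T ^ n : SpecialLinearGroup (Fin 2) (ZMod 7)) : Matrix (Fin 2) (Fin 2) (ZMod 7)) =
      !![1, (n : ZMod 7); 0, 1] := by
  induction n with
  | zero => ext i j; fin_cases i <;> fin_cases j <;> simp
  | succ n ih =>
    rw [pow_succ, Matrix.SpecialLinearGroup.coe_mul, ih]
    ext i j
    fin_cases i <;> fin_cases j <;>
      simp [T, Matrix.mul_apply, Fin.sum_univ_two] <;> push_cast <;> ring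

lemma Upow (n : ℕ) :
    ((U ^ n : SpecialLinearGroup (Fin 2) (ZMod 7)) : Matrix (Fin 2) (Fin 2) (ZMod 7)) =
      !![1, 0; (n : ZMod 7), 1] := by
  induction n with
  | zero => ext i j; fin_cases i <;> fin_cases j <;> simp
  | succ n ih =>
    rw [pow_succ, Matrix.SpecialLinearGroup.coe_mul, ih]
    ext i j
    fin_cases i <;> fin_cases j <;>
      simp [U, Matrix.mul_apply, Fin.sum_univ_two] <;> push_cast <;> ring

lemma mem_of_c_ne (g : SpecialLinearGroup (Fin 2) (ZMod 7)) (hC : g.1 1 0 ≠ 0) :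
    g ∈ Subgroup.closure {T, U} := by
  haveI : Fact (Nat.Prime 7) := ⟨by norm_num⟩
  obtain ⟨Ci, hCi⟩ : ∃ y : ZMod 7, y * g.1 1 0 = 1 := (IsUnit.mk0 _ hC).exists_left_inv
  have hdet : g.1 0 0 * g.1 1 1 - g.1 0 1 * g.1 1 0 = 1 := by
    have := g.2; rw [Matrix.det_fin_two] at this; exact this
  have key : g = T ^ (((g.1 0 0 - 1) * Ci : ZMod 7).val) * U ^ ((g.1 1 0).val)
      * T ^ (((g.1 1 1 - 1) * Ci : ZMod 7).val) := by
    apply Subtype.ext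
    rw [Matrix.SpecialLinearGroup.coe_mul, Matrix.SpecialLinearGroup.coe_mul,
      Tpow, Upow, Tpow, ZMod.natCast_val, ZMod.natCast_val, ZMod.natCast_val,
      ZMod.cast_id, ZMod.cast_id, ZMod.cast_id, Matrix.mul_fin_two, Matrix.mul_fin_two]
    ext i j
    fin_cases i <;> fin_cases j <;>
      simp only [Fin.zero_eta, Fin.mk_one, Matrix.cons_val_zero, Matrix.cons_val_one,
        Matrix.head_cons, Matrix.head_fin_const, Matrix.cons_val', Matrix.empty_val',
        Matrix.cons_val_fin_one, Matrix.of_apply]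
    · show g.1 0 0 = _
      linear_combination (1 - g.1 0 0) * hCi
    · show g.1 0 1 = _
      linear_combination (-(g.1 0 0 - 1) * (g.1 1 1 - 1) * Ci - g.1 0 1) * hCi + (-Ci) * hdet
    · show g.1 1 0 = _
      ring
    · show g.1 1 1 = _
      linear_combination (1 - g.1 1 1) * hCi
  rw [key]
  have hT : T ∈ Subgroup.closure {T, U} := Subgroup.subset_closure (by simp)
  have hU : U ∈ Subgroup.closure {T, U} := Subgroup.subset_closure (by simp)
  exact mul_mem (mul_mem (pow_mem hT _) (pow_mem hU _)) (pow_mem hT _)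

lemma mem_all (g : SpecialLinearGroup (Fin 2) (ZMod 7)) : g ∈ Subgroup.closure {T, U} := by
  by_cases hC : g.1 1 0 ≠ 0
  · exact mem_of_c_ne g hC
  · push_neg at hC
    have hU : U ∈ Subgroup.closure {T, U} := Subgroup.subset_closure (by simp)
    have h2 : (g * U).1 1 0 ≠ 0 := by
      have hdet : g.1 0 0 * g.1 1 1 - g.1 0 1 * g.1 1 0 = 1 := by
        have := g.2; rw [Matrix.det_fin_two] at this; exact this
      have he : (g * U).1 1 0 = g.1 1 1 := by
        rw [Matrix.SpecialLinearGroup.coe_mul]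
        show (g.1 * (U : Matrix (Fin 2) (Fin 2) (ZMod 7))) 1 0 = _
        rw [Matrix.mul_apply, Fin.sum_univ_two]
        simp [U, hC]
      rw [he]
      intro h
      rw [h, hC] at hdet
      simp at hdet
      exact absurd hdet (by decide)
    have hm := mem_of_c_ne (g * U) h2
    have : (g * U) * U⁻¹ ∈ Subgroup.closure {T, U} := mul_mem hm (inv_mem hU)
    simpa using this

lemma closure_TU : Subgroup.closure {T, U} = ⊤ :=
  (Subgroup.eq_top_iff' _).mpr mem_all

lemma wordT : b⁻¹ * a⁻¹ ^ 2 * b⁻¹ * a * b⁻¹ = T := by decide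

lemma wordU : c * a⁻¹ * b * c ^ 2 = U := by decide

lemma π_surj : Function.Surjective π := QuotientGroup.mk'_surjective _

lemma closure_πTU : Subgroup.closure {π T, π U} = ⊤ := by
  have h1 : (Subgroup.closure {T, U}).map π = Subgroup.closure (π '' {T, U}) :=
    MonoidHom.map_closure π {T, U}
  rw [closure_TU, Subgroup.map_top_of_surjective π π_surj,
    Set.image_insert_eq, Set.image_singleton] at h1
  exact h1.symm

lemma πwordT : (π b)⁻¹ * (π a)⁻¹ ^ 2 * (π b)⁻¹ * π a * (π b)⁻¹ = π T := by
  rw [← wordT]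
  simp only [_root_.map_mul, _root_.map_inv, _root_.map_pow]

lemma πwordU : π c * (π a)⁻¹ * π b * (π c) ^ 2 = π U := by
  rw [← wordU]
  simp only [_root_.map_mul, _root_.map_inv, _root_.map_pow]

/-- The images in `PSL(2, 7)` of `a = [[6,1],[6,0]]`, `b = [[1,6],[3,5]]`, `c = [[3,4],[0,5]]`
generate `PSL(2, 7)`; indeed `b⁻¹ a⁻² b⁻¹ a b⁻¹ = [[1,1],[0,1]]` and
`c a⁻¹ b c² = [[1,0],[1,1]]` in `PSL(2, 7)`, and the images of these two unipotent matrices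
generate `PSL(2, 7)`. -/
theorem PSL27_generators :
    Subgroup.closure {π a, π b, π c} = ⊤ ∧
      (π b)⁻¹ * (π a)⁻¹ ^ 2 * (π b)⁻¹ * π a * (π b)⁻¹ = π T ∧
      π c * (π a)⁻¹ * π b * (π c) ^ 2 = π U ∧
      Subgroup.closure {π T, π U} = ⊤ := by
  refine ⟨?_, πwordT, πwordU, closure_πTU⟩
  have ha : π a ∈ Subgroup.closure {π a, π b, π c} := Subgroup.subset_closure (by simp)
  have hb : π b ∈ Subgroup.closure {π a, π b, π c} := Subgroup.subset_closure (by simp)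
  have hc : π c ∈ Subgroup.closure {π a, π b, π c} := Subgroup.subset_closure (by simp)
  rw [eq_top_iff, ← closure_πTU]
  apply Subgroup.closure_le _ |>.mpr
  rintro x (rfl | rfl)
  · rw [← πwordT]
    exact mul_mem (mul_mem (mul_mem (mul_mem (inv_mem hb) (pow_mem (inv_mem ha) 2))
      (inv_mem hb)) ha) (inv_mem hb)
  · rw [← πwordU]
    exact mul_mem (mul_mem (mul_mem hc (inv_mem ha)) hb) (pow_mem hc 2)

end Stmt13
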